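/- arXiv:2601.03145 — 2 statements merged into one kernel-verified Lean document; each statement's English description precedes it below -/
import Mathlib

section
/- Let P ⊆ ℝ^d be a full-dimensional lattice polytope and suppose a_0, ..., a_ℓ ∈ (ℤ^d)* are Fine core normals of P (with ℓ ≥ 1) for which there exist real numbers λ_0, ..., λ_ℓ > 0 with λ_0 a_0 + ... + λ_ℓ a_ℓ = 0. Then there exist an integer ℓ' with 1 ≤ ℓ' ≤ ℓ and a full-dimensional lattice polytope Q ⊆ ℝ^{ℓ'} such that μ^F(P) = μ^F(Q). -/
open Set

noncomputable section

/-- The pairing `⟨a, x⟩ = ∑ i, a i * x i` of an integer linear functional with a point. -/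
def pair {d : ℕ} (a : Fin d → ℤ) (x : Fin d → ℝ) : ℝ := ∑ i, (a i : ℝ) * x i

/-- The support function `h_P(a) = min_{x ∈ P} ⟨a, x⟩`. -/
def suppFn {d : ℕ} (P : Set (Fin d → ℝ)) (a : Fin d → ℤ) : ℝ := sInf (pair a '' P)

/-- The Fine adjoint polytope `P^{F(s)}`. -/
def fineAdjoint {d : ℕ} (P : Set (Fin d → ℝ)) (s : ℝ) : Set (Fin d → ℝ) :=
  {x | ∀ a : Fin d → ℤ, a ≠ 0 → suppFn P a + s ≤ pair a x}

/-- The Fine number `n^F(P) = sup {s > 0 : P^{F(s)} ≠ ∅}`. -/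
def fineNumber {d : ℕ} (P : Set (Fin d → ℝ)) : ℝ :=
  sSup {s : ℝ | 0 < s ∧ (fineAdjoint P s).Nonempty}

/-- The Fine ℚ-codegree `μ^F(P) = (n^F(P))⁻¹`. -/
def fineCodeg {d : ℕ} (P : Set (Fin d → ℝ)) : ℝ := (fineNumber P)⁻¹

/-- The Fine core `core^F(P) = P^{F(n^F(P))}`. -/
def fineCore {d : ℕ} (P : Set (Fin d → ℝ)) : Set (Fin d → ℝ) := fineAdjoint P (fineNumber P)

/-- A rational polytope: the convex hull of finitely many rational points. -/
def IsRationalPolytope {d : ℕ} (P : Set (Fin d → ℝ)) : Prop :=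
  ∃ V : Finset (Fin d → ℝ), V.Nonempty ∧ (∀ v ∈ V, ∀ i, ∃ q : ℚ, v i = (q : ℝ)) ∧
    P = convexHull ℝ (V : Set (Fin d → ℝ))

/-- A lattice polytope: the convex hull of finitely many integer points. -/
def IsLatticePolytope {d : ℕ} (P : Set (Fin d → ℝ)) : Prop :=
  ∃ V : Finset (Fin d → ℝ), V.Nonempty ∧ (∀ v ∈ V, ∀ i, ∃ n : ℤ, v i = (n : ℝ)) ∧
    P = convexHull ℝ (V : Set (Fin d → ℝ))

/-- Full-dimensional: the affine hull is all of `ℝ^d`. -/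
def IsFullDim {d : ℕ} (P : Set (Fin d → ℝ)) : Prop := affineSpan ℝ P = ⊤

/-- A nonzero integer functional `a` is a Fine core normal of `P` if
`⟨a, y⟩ = h_P(a) + n^F(P)` for every `y` in the Fine core of `P`. -/
def IsFineCoreNormal {d : ℕ} (P : Set (Fin d → ℝ)) (a : Fin d → ℤ) : Prop :=
  a ≠ 0 ∧ ∀ y ∈ fineCore P, pair a y = suppFn P a + fineNumber P

/-- The set of integer points of `ℝ^k`. -/
def intPts (k : ℕ) : Set (Fin k → ℝ) := {x | ∀ i, ∃ n : ℤ, x i = (n : ℝ)}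

/-- The Fine spectrum in dimension `k`. -/
def fineSpec (k : ℕ) : Set ℝ :=
  {r | ∃ P : Set (Fin k → ℝ), IsLatticePolytope P ∧ IsFullDim P ∧ r = fineCodeg P}

/-- Unimodular equivalence of subsets of `ℝ^k`. -/
def UnimodEquiv {k : ℕ} (P Q : Set (Fin k → ℝ)) : Prop :=
  ∃ U : Matrix (Fin k) (Fin k) ℤ, IsUnit U.det ∧ ∃ v : Fin k → ℤ,
    P = (fun x => fun i => (∑ j, (U i j : ℝ) * x j) + (v i : ℝ)) '' Q

/-- The standard simplex `Δ_k = conv{0, e_1, ..., e_k}`. -/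
def stdSimp (k : ℕ) : Set (Fin k → ℝ) :=
  convexHull ℝ (insert (0 : Fin k → ℝ) (Set.range fun i => Pi.single i (1 : ℝ)))

/-- The lattice pyramid `Pyr(Q) = conv((Q × {1}) ∪ {0})`. -/
def pyrSet {k : ℕ} (Q : Set (Fin k → ℝ)) : Set (Fin (k + 1) → ℝ) :=
  convexHull ℝ (((fun x => Fin.snoc x (1 : ℝ)) '' Q) ∪ {0})

/-- Twice the standard triangle, `2Δ₂ = conv{(0,0),(2,0),(0,2)}`. -/
def twoDelta2 : Set (Fin 2 → ℝ) :=
  convexHull ℝ ({![0, 0], ![2, 0], ![0, 2]} : Set (Fin 2 → ℝ))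

/-- The `m`-fold iterated lattice pyramid over `2Δ₂`. -/
def iterPyr : (m : ℕ) → Set (Fin (2 + m) → ℝ)
  | 0 => twoDelta2
  | m + 1 => pyrSet (iterPyr m)

end


/-!
The core normals `a i` span a sublattice `L ⊆ ℤ^d` whose rank `n` is at most `ℓ`, because
they satisfy a nontrivial real, hence integral, linear relation. Let `B` be a matrix whose rows
form a basis of `L` and let `π = B : ℝ^d → ℝⁿ`; then `Q = π(P)` is a full-dimensional lattice
polytope with `h_Q(c) = h_P(cB)`, so `π` maps `P^{F(s)}` into `Q^{F(s)}` and `n^F(P) ≤ n^F(Q)`.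
Conversely, a point of `Q^{F(s)}` lifts to some `x` with `⟨a i, x⟩ ≥ h_P(a i) + s` for all `i`,
while a point `y` of the Fine core satisfies `⟨a i, y⟩ = h_P(a i) + n^F(P)`. Pairing the
difference `x - y` with the positive relation `∑ λᵢ aᵢ = 0` gives `s ≤ n^F(P)`.
-/

open Matrix

variable {d n : ℕ}

section Pairing

lemma pair_eq_dotProduct (a : Fin d → ℤ) (x : Fin d → ℝ) :
    pair a x = (fun i => (a i : ℝ)) ⬝ᵥ x := rfl

lemma continuous_pair (a : Fin d → ℤ) : Continuous (pair a) :=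
  continuous_finsetSum _ fun i _ => continuous_const.mul (continuous_apply i)

lemma pair_single (k : Fin d) (x : Fin d → ℝ) : pair (Pi.single k 1) x = x k := by
  simp [pair, Pi.single_apply]

lemma pair_neg (a : Fin d → ℤ) (x : Fin d → ℝ) : pair (-a) x = -pair a x := by
  simp [pair, Finset.sum_neg_distrib]

lemma sum_mul_pair_eq_zero {ι : Type*} [Fintype ι] {a : ι → Fin d → ℤ} {lam : ι → ℝ}
    (hrel : ∀ j, ∑ i, lam i * (a i j : ℝ) = 0) (x : Fin d → ℝ) :
    ∑ i, lam i * pair (a i) x = 0 := by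
  simp_rw [pair, Finset.mul_sum, ← mul_assoc]
  rw [Finset.sum_comm]
  simp_rw [← Finset.sum_mul, hrel, zero_mul, Finset.sum_const_zero]

lemma le_of_pos_relation {ι : Type*} [Fintype ι] [Nonempty ι] {a : ι → Fin d → ℤ}
    {lam : ι → ℝ} (hlam : ∀ i, 0 < lam i) (hrel : ∀ j, ∑ i, lam i * (a i j : ℝ) = 0)
    {h : ι → ℝ} {x y : Fin d → ℝ} {s t : ℝ}
    (hx : ∀ i, h i + s ≤ pair (a i) x) (hy : ∀ i, pair (a i) y ≤ h i + t) : s ≤ t := by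
  have key : (∑ i, lam i) * (s - t) ≤ 0 := calc
    (∑ i, lam i) * (s - t) = ∑ i, lam i * (s - t) := Finset.sum_mul ..
    _ ≤ ∑ i, lam i * (pair (a i) x - pair (a i) y) :=
      Finset.sum_le_sum fun i _ =>
        mul_le_mul_of_nonneg_left (by linarith [hx i, hy i]) (hlam i).le
    _ = 0 := by simp_rw [mul_sub, Finset.sum_sub_distrib, sum_mul_pair_eq_zero hrel, sub_zero]
  have hsum : 0 < ∑ i, lam i := Finset.sum_pos (fun i _ => hlam i) Finset.univ_nonempty
  nlinarith

end Pairing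

section FineAdjoint

variable {P : Set (Fin d → ℝ)}

lemma suppFn_le_pair (hP : IsCompact P) {x : Fin d → ℝ} (hx : x ∈ P) (a : Fin d → ℤ) :
    suppFn P a ≤ pair a x :=
  csInf_le (hP.image (continuous_pair a)).bddBelow ⟨x, hx, rfl⟩

lemma fineAdjoint_antitone : Antitone (fineAdjoint P) :=
  fun _ _ hst _ hx a ha => by linarith [hx a ha]

lemma isClosed_fineAdjoint (s : ℝ) : IsClosed (fineAdjoint P s) := by
  have : fineAdjoint P s = ⋂ (a : Fin d → ℤ) (_ : a ≠ 0), {x | suppFn P a + s ≤ pair a x} := by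
    ext x
    simp [fineAdjoint]
  rw [this]
  exact isClosed_iInter fun a => isClosed_iInter fun _ =>
    isClosed_le continuous_const (continuous_pair a)

lemma fineAdjoint_subset_Icc (s : ℝ) :
    fineAdjoint P s ⊆ Icc (fun k => suppFn P (Pi.single k 1) + s)
      (fun k => -(suppFn P (-Pi.single k 1) + s)) := by
  intro x hx
  have hne (k : Fin d) : (Pi.single k 1 : Fin d → ℤ) ≠ 0 := Pi.single_ne_zero_iff.mpr one_ne_zero
  refine ⟨fun k => ?_, fun k => ?_⟩
  · simpa [pair_single] using hx _ (hne k)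
  · have := hx _ (neg_ne_zero.mpr (hne k))
    rw [pair_neg, pair_single] at this
    linarith

lemma isCompact_fineAdjoint (s : ℝ) : IsCompact (fineAdjoint P s) :=
  isCompact_Icc.of_isClosed_subset (isClosed_fineAdjoint s) (fineAdjoint_subset_Icc s)

def fineNumberSet (P : Set (Fin d → ℝ)) : Set ℝ := {s | 0 < s ∧ (fineAdjoint P s).Nonempty}

lemma fineNumberSet_nonempty (hP : IsCompact P) (hint : (interior P).Nonempty) :
    (fineNumberSet P).Nonempty := by
  obtain ⟨x, hx⟩ := hint
  obtain ⟨ε, hε, hball⟩ := Metric.isOpen_iff.mp isOpen_interior x hx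
  refine ⟨ε / 2, half_pos hε, x, fun c hc => ?_⟩
  -- move from `x` against the sign pattern of `c`; this lowers `⟨c, ·⟩` by `ε/2 · ∑ |c k| ≥ ε/2`
  set v : Fin d → ℝ := fun k => ((c k).sign : ℝ)
  have hv : ‖v‖ ≤ 1 := (pi_norm_le_iff_of_nonneg zero_le_one).mpr fun k => by
    rcases lt_trichotomy (c k) 0 with h | h | h <;> simp [v, h, Int.sign_eq_neg_one_of_neg,
      Int.sign_eq_one_of_pos]
  have hmem : x - (ε / 2) • v ∈ P := by
    refine interior_subset (hball ?_)
    rw [Metric.mem_ball, dist_eq_norm, sub_sub_cancel_left, norm_neg, norm_smul,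
      Real.norm_of_nonneg (half_pos hε).le]
    nlinarith [norm_nonneg v]
  have hcv : 1 ≤ pair c v := by
    obtain ⟨k, hk⟩ := Function.ne_iff.mp hc
    have : pair c v = ∑ k, ((c k).natAbs : ℝ) := by
      simp [pair, v, ← Int.cast_mul, Int.mul_sign_self]
    rw [this]
    exact (Nat.one_le_cast.mpr (Int.natAbs_pos.mpr hk)).trans
      (Finset.single_le_sum (f := fun k => ((c k).natAbs : ℝ)) (fun _ _ => Nat.cast_nonneg _)
        (Finset.mem_univ k))
  have := suppFn_le_pair hP hmem c
  rw [pair_eq_dotProduct, dotProduct_sub, dotProduct_smul, smul_eq_mul, ← pair_eq_dotProduct,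
    ← pair_eq_dotProduct] at this
  nlinarith

lemma fineCore_nonempty (hne : (fineNumberSet P).Nonempty) : (fineCore P).Nonempty := by
  have : Nonempty (fineNumberSet P) := hne.to_subtype
  obtain ⟨x, hx⟩ := IsCompact.nonempty_iInter_of_directed_nonempty_isCompact_isClosed
    (fun s : fineNumberSet P => fineAdjoint P s)
    (fineAdjoint_antitone.comp_monotone (Subtype.mono_coe _)).directed_ge (fun s => s.2.2)
    (fun s => isCompact_fineAdjoint s) (fun s => isClosed_fineAdjoint s)
  refine ⟨x, fun a ha => ?_⟩
  have : fineNumber P ≤ pair a x - suppFn P a := csSup_le hne fun s hs => by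
    have := mem_iInter.mp hx ⟨s, hs⟩ a ha
    linarith
  linarith

end FineAdjoint

lemma IsLatticePolytope.isCompact {P : Set (Fin d → ℝ)} (hP : IsLatticePolytope P) :
    IsCompact P := by
  obtain ⟨V, -, -, rfl⟩ := hP
  exact V.finite_toSet.isCompact_convexHull ℝ

lemma IsLatticePolytope.convex {P : Set (Fin d → ℝ)} (hP : IsLatticePolytope P) :
    Convex ℝ P := by
  obtain ⟨V, -, -, rfl⟩ := hP
  exact convex_convexHull ℝ _

lemma IsFullDim.image_of_surjective {P : Set (Fin d → ℝ)} (hP : IsFullDim P)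
    (f : (Fin d → ℝ) →ₗ[ℝ] (Fin n → ℝ)) (hf : Function.Surjective f) : IsFullDim (f '' P) :=
  AffineMap.span_eq_top_of_surjective f.toAffineMap hf hP

section LatticeProjection

def latticeProj (B : Matrix (Fin n) (Fin d) ℤ) : (Fin d → ℝ) →ₗ[ℝ] (Fin n → ℝ) :=
  (B.map (Int.cast : ℤ → ℝ)).mulVecLin

variable (B : Matrix (Fin n) (Fin d) ℤ)

lemma pair_latticeProj (c : Fin n → ℤ) (x : Fin d → ℝ) :
    pair c (latticeProj B x) = pair (c ᵥ* B) x := by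
  rw [latticeProj, mulVecLin_apply, pair_eq_dotProduct, dotProduct_mulVec, pair_eq_dotProduct]
  congr 1
  funext j
  exact (RingHom.map_vecMul (Int.castRingHom ℝ) B c j).symm

lemma suppFn_image_latticeProj (P : Set (Fin d → ℝ)) (c : Fin n → ℤ) :
    suppFn (latticeProj B '' P) c = suppFn P (c ᵥ* B) := by
  simp_rw [suppFn, image_image, pair_latticeProj]

variable {B}

lemma mapsTo_latticeProj_fineAdjoint (hB : LinearIndependent ℤ B.row) (P : Set (Fin d → ℝ))
    (s : ℝ) : MapsTo (latticeProj B) (fineAdjoint P s) (fineAdjoint (latticeProj B '' P) s) := by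
  intro x hx c hc
  rw [suppFn_image_latticeProj, pair_latticeProj]
  refine hx _ fun h => hc (vecMul_injective_iff.mpr hB ?_)
  change c ᵥ* B = 0 ᵥ* B
  rw [h, zero_vecMul]

lemma latticeProj_surjective (hB : LinearIndependent ℤ B.row) :
    Function.Surjective (latticeProj B) := by
  have hBℝ := (linearIndependent_algebraMap_comp_iff (S := ℝ)).mpr hB
  rw [show (fun i => algebraMap ℤ ℝ ∘ B.row i) = (B.map (algebraMap ℤ ℝ)).row from rfl] at hBℝ
  have hrank := hBℝ.rank_matrix
  rw [Fintype.card_fin] at hrank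
  rw [← LinearMap.range_eq_top]
  apply Submodule.eq_top_of_finrank_eq
  rw [Module.finrank_fin_fun]
  exact hrank

lemma IsLatticePolytope.image_latticeProj {P : Set (Fin d → ℝ)} (hP : IsLatticePolytope P) :
    IsLatticePolytope (latticeProj B '' P) := by
  obtain ⟨V, hV, hVint, rfl⟩ := hP
  refine ⟨V.image (latticeProj B), hV.image _, ?_, by
    rw [Finset.coe_image, (latticeProj B).image_convexHull]⟩
  intro w hw j
  obtain ⟨v, hv, rfl⟩ := Finset.mem_image.mp hw
  choose m hm using hVint v hv
  obtain rfl : v = fun i => (m i : ℝ) := funext hm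
  exact ⟨(B *ᵥ m) j, (RingHom.map_mulVec (Int.castRingHom ℝ) B m j).symm⟩

end LatticeProjection

lemma not_linearIndependent_of_relation {ι : Type*} [Fintype ι] {a : ι → Fin d → ℤ}
    {lam : ι → ℝ} (hlam : lam ≠ 0) (hrel : ∀ j, ∑ i, lam i * (a i j : ℝ) = 0) :
    ¬ LinearIndependent ℤ a := by
  rw [← linearIndependent_algebraMap_comp_iff (S := ℝ), Fintype.not_linearIndependent_iff]
  obtain ⟨i, hi⟩ := Function.ne_iff.mp hlam
  exact ⟨lam, funext fun j => by simpa [Finset.sum_apply] using hrel j, i, hi⟩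

lemma exists_basis_matrix_of_not_linearIndependent {ι : Type*} [Fintype ι]
    {a : ι → Fin d → ℤ} (hdep : ¬ LinearIndependent ℤ a) (hne : a ≠ 0) :
    ∃ n, 0 < n ∧ n < Fintype.card ι ∧ ∃ B : Matrix (Fin n) (Fin d) ℤ,
      LinearIndependent ℤ B.row ∧ ∀ i, ∃ c, c ᵥ* B = a i := by
  set L := Submodule.span ℤ (range a)
  obtain ⟨n, bL⟩ := Submodule.basisOfPid (Pi.basisFun ℤ (Fin d)) L
  set B : Matrix (Fin n) (Fin d) ℤ := Matrix.of fun j => (bL j : Fin d → ℤ)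
  have hrepr (i : ι) : ∃ c, c ᵥ* B = a i := by
    refine ⟨bL.repr ⟨a i, Submodule.subset_span ⟨i, rfl⟩⟩, ?_⟩
    have := congrArg Subtype.val (bL.sum_repr ⟨a i, Submodule.subset_span ⟨i, rfl⟩⟩)
    rw [vecMul_eq_sum]
    simp only [Submodule.coe_sum, Submodule.coe_smul] at this
    exact this
  have hn : n = Set.finrank ℤ (range a) := by
    rw [Set.finrank, Module.finrank_eq_card_basis bL, Fintype.card_fin]
  refine ⟨n, Nat.pos_of_ne_zero ?_, ?_, B, bL.linearIndependent.map' L.subtype L.ker_subtype, hrepr⟩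
  · rintro rfl
    refine hne (funext fun i => ?_)
    obtain ⟨c, hc⟩ := hrepr i
    rw [← hc]
    simp [vecMul_eq_sum]
  · exact hn ▸ (finrank_range_le_card a).lt_of_ne
      (mt linearIndependent_iff_card_eq_finrank_span.mpr hdep ∘ Eq.symm)

lemma fineNumber_image_latticeProj {ι : Type*} [Fintype ι] [Nonempty ι] {P : Set (Fin d → ℝ)}
    (hne : (fineNumberSet P).Nonempty)
    {a : ι → Fin d → ℤ} (ha : ∀ i, IsFineCoreNormal P (a i)) {lam : ι → ℝ}
    (hlam : ∀ i, 0 < lam i) (hrel : ∀ j, ∑ i, lam i * (a i j : ℝ) = 0)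
    {B : Matrix (Fin n) (Fin d) ℤ} (hB : LinearIndependent ℤ B.row)
    (hc : ∀ i, ∃ c, c ᵥ* B = a i) :
    fineNumber (latticeProj B '' P) = fineNumber P := by
  obtain ⟨y, hy⟩ := fineCore_nonempty hne
  have hle : ∀ s ∈ fineNumberSet (latticeProj B '' P), s ≤ fineNumber P := by
    rintro s ⟨-, z, hz⟩
    obtain ⟨x, rfl⟩ := latticeProj_surjective hB z
    refine le_of_pos_relation (x := x) hlam hrel (fun i => ?_) (fun i => ((ha i).2 y hy).le)
    obtain ⟨c, hci⟩ := hc i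
    have := hz c (by rintro rfl; exact (ha i).1 (by rw [← hci, zero_vecMul]))
    rwa [suppFn_image_latticeProj, pair_latticeProj, hci] at this
  have hsub : fineNumberSet P ⊆ fineNumberSet (latticeProj B '' P) :=
    fun s ⟨hs, x, hx⟩ => ⟨hs, _, mapsTo_latticeProj_fineAdjoint hB P s hx⟩
  exact le_antisymm (csSup_le (hne.mono hsub) hle) (csSup_le_csSup ⟨_, hle⟩ hne hsub)

theorem stmt_6_general {d : ℕ} (P : Set (Fin d → ℝ)) (hP : IsLatticePolytope P) (hfull : IsFullDim P)
    (ℓ : ℕ) (a : Fin (ℓ + 1) → Fin d → ℤ)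
    (ha : ∀ i, IsFineCoreNormal P (a i))
    (lam : Fin (ℓ + 1) → ℝ) (hlam : ∀ i, 0 < lam i)
    (hrel : ∀ j, ∑ i, lam i * (a i j : ℝ) = 0) :
    ∃ ℓ' : ℕ, 1 ≤ ℓ' ∧ ℓ' ≤ ℓ ∧ ∃ Q : Set (Fin ℓ' → ℝ),
      IsLatticePolytope Q ∧ IsFullDim Q ∧ fineCodeg P = fineCodeg Q := by
  have hne : (fineNumberSet P).Nonempty := fineNumberSet_nonempty hP.isCompact
    (hP.convex.interior_nonempty_iff_affineSpan_eq_top.mpr hfull)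
  obtain ⟨n, hn, hnℓ, B, hB, hc⟩ := exists_basis_matrix_of_not_linearIndependent
    (not_linearIndependent_of_relation (fun h => (hlam 0).ne' (congrFun h 0)) hrel)
    (fun h => (ha 0).1 (congrFun h 0))
  refine ⟨n, hn, Nat.lt_succ_iff.mp (by simpa using hnℓ), latticeProj B '' P,
    hP.image_latticeProj, hfull.image_of_surjective _ (latticeProj_surjective hB), ?_⟩
  rw [fineCodeg, fineCodeg, fineNumber_image_latticeProj hne ha hlam hrel hB hc]

/-- a positive linear relation among Fine core normals allows reducing
the dimension while preserving the Fine ℚ-codegree. -/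
theorem stmt_6 {d : ℕ} (P : Set (Fin d → ℝ)) (hP : IsLatticePolytope P) (hfull : IsFullDim P)
    (ℓ : ℕ) (hℓ : 1 ≤ ℓ) (a : Fin (ℓ + 1) → Fin d → ℤ)
    (ha : ∀ i, IsFineCoreNormal P (a i))
    (lam : Fin (ℓ + 1) → ℝ) (hlam : ∀ i, 0 < lam i)
    (hrel : ∀ j, ∑ i, lam i * (a i j : ℝ) = 0) :
    ∃ ℓ' : ℕ, 1 ≤ ℓ' ∧ ℓ' ≤ ℓ ∧ ∃ Q : Set (Fin ℓ' → ℝ),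
      IsLatticePolytope Q ∧ IsFullDim Q ∧ fineCodeg P = fineCodeg Q :=
  stmt_6_general P hP hfull ℓ a ha lam hlam hrel
end

section
/- Let P ⊆ ℝ^d be a full-dimensional lattice polytope, let Pyr(P) = conv((P × {1}) ∪ {0}) ⊆ ℝ^{d+1}, and let 0 < t < 1. If the Fine adjoint polytope (Pyr(P))^{F(t)} is nonempty, then P^{F(s)} is nonempty for s = t/(1-t). In fact, if (p, h) ∈ (Pyr(P))^{F(t)}, then p/h ∈ P^{F(t/(1-t))}. -/
open Set

/-!
Write `q = (p, h)` for a point of `Pyr(P)^{F(t)}` and test it against three kinds of integer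
functionals on `ℝ^{d+1}`. The functionals `(0, 1)` and `(0, -1)` have support values `0` and `-1`
on the pyramid, so `t ≤ h ≤ 1 - t`. For `a ≠ 0`, the support value `h_P(a)` is an integer because
`P` is a lattice polytope, so `(a, -h_P(a))` is an integer functional; it is nonnegative on
`P × {1}` and on the apex, hence `⟨a, p⟩ - h_P(a) h ≥ t`. Dividing by `h` gives
`⟨a, p / h⟩ ≥ h_P(a) + t / h ≥ h_P(a) + t / (1 - t)`.
-/

section Pairing

variable {d : ℕ}

lemma isLinearMap_pair (a : Fin d → ℤ) : IsLinearMap ℝ (pair a) where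
  map_add x y := by simp [pair, mul_add, Finset.sum_add_distrib]
  map_smul c x := by simp [pair, Finset.mul_sum, mul_left_comm]

@[simp]
lemma pair_zero_left (x : Fin d → ℝ) : pair 0 x = 0 := by
  simp [pair]

lemma pair_div_const (a : Fin d → ℤ) (x : Fin d → ℝ) (c : ℝ) :
    pair a (fun i => x i / c) = pair a x / c := by
  simp [pair, Finset.sum_div, mul_div_assoc]

lemma pair_snoc (a : Fin d → ℤ) (b : ℤ) (q : Fin (d + 1) → ℝ) :
    pair (Fin.snoc a b) q = pair a (fun i => q i.castSucc) + b * q (Fin.last d) := by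
  simp [pair, Fin.sum_univ_castSucc]

lemma le_pair_of_mem_convexHull {a : Fin d → ℤ} {S : Set (Fin d → ℝ)} {c : ℝ}
    (h : ∀ x ∈ S, c ≤ pair a x) {x : Fin d → ℝ} (hx : x ∈ convexHull ℝ S) : c ≤ pair a x :=
  convexHull_min h (convex_halfSpace_ge (isLinearMap_pair a) c) hx

end Pairing

lemma IsLatticePolytope.exists_suppFn_eq_intCast {d : ℕ} {P : Set (Fin d → ℝ)}
    (hP : IsLatticePolytope P) (a : Fin d → ℤ) :
    ∃ n : ℤ, suppFn P a = n ∧ ∀ x ∈ P, (n : ℝ) ≤ pair a x := by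
  obtain ⟨V, hVne, hVint, rfl⟩ := hP
  obtain ⟨v, hvV, hvmin⟩ := V.exists_min_image (pair a) hVne
  choose z hz using hVint v hvV
  have hv_int : pair a v = ((∑ i, a i * z i : ℤ) : ℝ) := by
    simp [pair, hz]
  have hv_least : IsLeast (pair a '' convexHull ℝ (V : Set (Fin d → ℝ))) (pair a v) :=
    ⟨⟨v, subset_convexHull ℝ _ hvV, rfl⟩, by
      rintro _ ⟨x, hx, rfl⟩
      exact le_pair_of_mem_convexHull hvmin hx⟩
  refine ⟨∑ i, a i * z i, hv_least.csInf_eq.trans hv_int, fun x hx => ?_⟩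
  rw [← hv_int]
  exact hv_least.2 ⟨x, hx, rfl⟩

section Pyramid

variable {d : ℕ} {P : Set (Fin d → ℝ)}

lemma le_suppFn_pyrSet {a : Fin d → ℤ} {b : ℤ} {r : ℝ} (hr : r ≤ 0)
    (hP : ∀ x ∈ P, r ≤ pair a x + b) : r ≤ suppFn (pyrSet P) (Fin.snoc a b) := by
  have hgen : ∀ g ∈ ((fun x => Fin.snoc x (1 : ℝ)) '' P) ∪ {0}, r ≤ pair (Fin.snoc a b) g := by
    rintro g (⟨x, hx, rfl⟩ | rfl)
    · simpa [pair_snoc] using hP x hx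
    · simpa [pair] using hr
  refine le_csInf ⟨_, 0, subset_convexHull ℝ _ (Or.inr rfl), rfl⟩ ?_
  rintro _ ⟨g, hg, rfl⟩
  exact le_pair_of_mem_convexHull hgen hg

variable {s : ℝ} {q : Fin (d + 1) → ℝ}

lemma le_pair_snoc_of_mem_fineAdjoint_pyrSet (hq : q ∈ fineAdjoint (pyrSet P) s)
    {a : Fin d → ℤ} {b : ℤ} (hab : (Fin.snoc a b : Fin (d + 1) → ℤ) ≠ 0) {r : ℝ} (hr : r ≤ 0)
    (hP : ∀ x ∈ P, r ≤ pair a x + b) :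
    r + s ≤ pair a (fun i => q i.castSucc) + b * q (Fin.last d) := by
  rw [← pair_snoc]
  exact (add_le_add_left (le_suppFn_pyrSet hr hP) s).trans (hq _ hab)

lemma snoc_zero_ne_zero {b : ℤ} (hb : b ≠ 0) :
    (Fin.snoc (0 : Fin d → ℤ) b : Fin (d + 1) → ℤ) ≠ 0 :=
  fun h => hb (by simpa using congrFun h (Fin.last d))

lemma le_last_of_mem_fineAdjoint_pyrSet (hq : q ∈ fineAdjoint (pyrSet P) s) :
    s ≤ q (Fin.last d) := by
  have := le_pair_snoc_of_mem_fineAdjoint_pyrSet (P := P) hq (snoc_zero_ne_zero one_ne_zero)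
    le_rfl (fun _ _ => by simp)
  simpa using this

lemma last_le_of_mem_fineAdjoint_pyrSet (hq : q ∈ fineAdjoint (pyrSet P) s) :
    q (Fin.last d) ≤ 1 - s := by
  have := le_pair_snoc_of_mem_fineAdjoint_pyrSet (P := P) hq
    (snoc_zero_ne_zero (neg_ne_zero.mpr one_ne_zero)) (neg_nonpos.mpr zero_le_one)
    (fun _ _ => by simp)
  simp only [pair_zero_left, Int.cast_neg, Int.cast_one, neg_mul, one_mul, zero_add] at this
  linarith

lemma div_last_mem_fineAdjoint_of_mem_fineAdjoint_pyrSet (hP : IsLatticePolytope P) {t : ℝ}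
    (ht : 0 < t) (hq : q ∈ fineAdjoint (pyrSet P) t) :
    (fun i => q i.castSucc / q (Fin.last d)) ∈ fineAdjoint P (t / (1 - t)) := by
  intro a ha
  set h := q (Fin.last d)
  have hth : t ≤ h := le_last_of_mem_fineAdjoint_pyrSet hq
  have hh : 0 < h := ht.trans_le hth
  obtain ⟨n, hn, hnP⟩ := hP.exists_suppFn_eq_intCast a
  have hsnoc : (Fin.snoc a (-n) : Fin (d + 1) → ℤ) ≠ 0 := fun h0 =>
    ha (funext fun i => by simpa using congrFun h0 i.castSucc)
  have hpair : 0 + t ≤ pair a (fun i => q i.castSucc) + ((-n : ℤ) : ℝ) * h :=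
    le_pair_snoc_of_mem_fineAdjoint_pyrSet hq hsnoc le_rfl
      (fun x hx => by push_cast; linarith [hnP x hx])
  have hdiv : t / (1 - t) ≤ t / h :=
    div_le_div_of_nonneg_left ht.le hh (last_le_of_mem_fineAdjoint_pyrSet hq)
  rw [pair_div_const, hn, le_div_iff₀ hh]
  push_cast at hpair
  calc (n + t / (1 - t)) * h ≤ (n + t / h) * h := by gcongr
    _ = n * h + t := by field_simp
    _ ≤ pair a (fun i => q i.castSucc) := by linarith

end Pyramid

theorem stmt_10_general {d : ℕ} (P : Set (Fin d → ℝ)) (hP : IsLatticePolytope P)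
    (t : ℝ) (ht0 : 0 < t) :
    ((fineAdjoint (pyrSet P) t).Nonempty → (fineAdjoint P (t / (1 - t))).Nonempty) ∧
    (∀ q ∈ fineAdjoint (pyrSet P) t,
      (fun i => q (Fin.castSucc i) / q (Fin.last d)) ∈ fineAdjoint P (t / (1 - t))) := by
  have hmem : ∀ q ∈ fineAdjoint (pyrSet P) t,
      (fun i => q (Fin.castSucc i) / q (Fin.last d)) ∈ fineAdjoint P (t / (1 - t)) :=
    fun q hq => div_last_mem_fineAdjoint_of_mem_fineAdjoint_pyrSet hP ht0 hq
  exact ⟨fun ⟨q, hq⟩ => ⟨_, hmem q hq⟩, hmem⟩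

/-- a nonempty Fine adjoint of the pyramid yields a nonempty Fine
adjoint of the base at parameter `t / (1 - t)`, via the map `(p, h) ↦ p / h`. -/
theorem stmt_10 {d : ℕ} (hd : 1 ≤ d) (P : Set (Fin d → ℝ)) (hP : IsLatticePolytope P)
    (hfull : IsFullDim P) (t : ℝ) (ht0 : 0 < t) (ht1 : t < 1) :
    ((fineAdjoint (pyrSet P) t).Nonempty → (fineAdjoint P (t / (1 - t))).Nonempty) ∧
    (∀ q ∈ fineAdjoint (pyrSet P) t,
      (fun i => q (Fin.castSucc i) / q (Fin.last d)) ∈ fineAdjoint P (t / (1 - t))) :=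
  stmt_10_general P hP t ht0
end
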